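/- arXiv:2103.00460 — 2 statements merged into one kernel-verified Lean document; each statement's English description precedes it below -/
import Mathlib

section
/- Steady inf-sup bound in the coincident-domain case: Let Y be a real Hilbert space, a : Y × Y → ℝ bilinear and coercive with constant γ > 0, m : Y × Y → ℝ a symmetric bilinear form, and α with 0 < α ≤ 1. Define B_s((y,p),(z,q)) = a(y,z) - (1/α) m(p,z) + m(y,q) + a(q,p). Then for every (y,p) ∈ Y × Y, B_s((y,p),(α y, p)) ≥ α γ (‖y‖² + ‖p‖²), and consequently sup over (z,q) ≠ 0 of B_s((y,p),(z,q))/√(‖z‖²+‖q‖²) ≥ α γ √(‖y‖²+‖p‖²). -/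
section SteadyForm

variable {Y : Type*} [NormedAddCommGroup Y] [NormedSpace ℝ Y]

/-- The steady saddle-point form `B_s((y, p), (z, q))`, with the control form `c` equal to `m`. -/
noncomputable def steadyForm (a m : Y →ₗ[ℝ] Y →ₗ[ℝ] ℝ) (α : ℝ) (y p z q : Y) : ℝ :=
  a y z - (1 / α) * m p z + m y q + a q p

/-- Testing with `(α y, p)` makes the two coupling terms cancel, by symmetry of `m`. -/
lemma steadyForm_smul_self {a m : Y →ₗ[ℝ] Y →ₗ[ℝ] ℝ} {α : ℝ}
    (hm : ∀ v w : Y, m v w = m w v) (hα : α ≠ 0) (y p : Y) :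
    steadyForm a m α y p (α • y) p = α * a y y + a p p := by
  simp only [steadyForm, map_smul, smul_eq_mul, hm p y]
  field_simp
  ring

lemma steadyForm_smul_self_ge {a m : Y →ₗ[ℝ] Y →ₗ[ℝ] ℝ} {γ α : ℝ}
    (hcoer : ∀ v : Y, a v v ≥ γ * ‖v‖ ^ 2) (hm : ∀ v w : Y, m v w = m w v)
    (hγ : 0 ≤ γ) (hα₀ : 0 < α) (hα₁ : α ≤ 1) (y p : Y) :
    α * γ * (‖y‖ ^ 2 + ‖p‖ ^ 2) ≤ steadyForm a m α y p (α • y) p := by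
  rw [steadyForm_smul_self hm hα₀.ne']
  have hp : α * (γ * ‖p‖ ^ 2) ≤ γ * ‖p‖ ^ 2 :=
    mul_le_of_le_one_left (by positivity) hα₁
  nlinarith [mul_le_mul_of_nonneg_left (hcoer y) hα₀.le, hcoer p]

lemma sqrt_norm_smul_sq_add_le {α : ℝ} (hα : |α| ≤ 1) (y p : Y) :
    √(‖α • y‖ ^ 2 + ‖p‖ ^ 2) ≤ √(‖y‖ ^ 2 + ‖p‖ ^ 2) := by
  gcongr
  calc ‖α • y‖ = |α| * ‖y‖ := by rw [norm_smul, Real.norm_eq_abs]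
    _ ≤ ‖y‖ := mul_le_of_le_one_left (norm_nonneg y) hα

end SteadyForm

theorem steady_infsup_coincident_general
    {Y : Type*} [NormedAddCommGroup Y] [InnerProductSpace ℝ Y]
    (a m : Y →ₗ[ℝ] Y →ₗ[ℝ] ℝ) (γ α : ℝ)
    (hγ : 0 < γ) (hcoer : ∀ v : Y, a v v ≥ γ * ‖v‖ ^ 2)
    (hsymm : ∀ v w : Y, m v w = m w v)
    (hα₀ : 0 < α) (hα₁ : α ≤ 1) :
    ∀ y p : Y,
      (a y (α • y) - (1 / α) * m p (α • y) + m y p + a p p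
          ≥ α * γ * (‖y‖ ^ 2 + ‖p‖ ^ 2)) ∧
      ((y, p) ≠ (0, 0) →
        ∃ z q : Y, ¬(z = 0 ∧ q = 0) ∧
          a y z - (1 / α) * m p z + m y q + a q p
            ≥ α * γ * Real.sqrt (‖y‖ ^ 2 + ‖p‖ ^ 2) * Real.sqrt (‖z‖ ^ 2 + ‖q‖ ^ 2)) := by
  intro y p
  have hdiag := steadyForm_smul_self_ge hcoer hsymm hγ.le hα₀ hα₁ y p
  refine ⟨hdiag, fun hne => ⟨α • y, p, ?_, ?_⟩⟩
  · rintro ⟨hy, rfl⟩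
    exact hne (by simp [(smul_eq_zero_iff_right hα₀.ne').mp hy])
  · have hnorm := sqrt_norm_smul_sq_add_le (abs_le.mpr ⟨by linarith, hα₁⟩) y p
    calc α * γ * √(‖y‖ ^ 2 + ‖p‖ ^ 2) * √(‖α • y‖ ^ 2 + ‖p‖ ^ 2)
        ≤ α * γ * √(‖y‖ ^ 2 + ‖p‖ ^ 2) * √(‖y‖ ^ 2 + ‖p‖ ^ 2) := by gcongr
      _ = α * γ * (‖y‖ ^ 2 + ‖p‖ ^ 2) := by rw [mul_assoc, Real.mul_self_sqrt (by positivity)]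
      _ ≤ steadyForm a m α y p (α • y) p := hdiag

theorem steady_infsup_coincident
    {Y : Type*} [NormedAddCommGroup Y] [InnerProductSpace ℝ Y] [CompleteSpace Y]
    (a m : Y →ₗ[ℝ] Y →ₗ[ℝ] ℝ) (γ α : ℝ)
    (hγ : 0 < γ) (hcoer : ∀ v : Y, a v v ≥ γ * ‖v‖ ^ 2)
    (hsymm : ∀ v w : Y, m v w = m w v)
    (hα₀ : 0 < α) (hα₁ : α ≤ 1) :
    ∀ y p : Y,
      (a y (α • y) - (1 / α) * m p (α • y) + m y p + a p p
          ≥ α * γ * (‖y‖ ^ 2 + ‖p‖ ^ 2)) ∧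
      ((y, p) ≠ (0, 0) →
        ∃ z q : Y, ¬(z = 0 ∧ q = 0) ∧
          a y z - (1 / α) * m p z + m y q + a q p
            ≥ α * γ * Real.sqrt (‖y‖ ^ 2 + ‖p‖ ^ 2) * Real.sqrt (‖z‖ ^ 2 + ‖q‖ ^ 2)) :=
  steady_infsup_coincident_general a m γ α hγ hcoer hsymm hα₀ hα₁
end

section
/- Discrete surjectivity inf-sup with coincident domains: Let Q be a real Hilbert space (playing the role of the discrete space-time space), and let S, A, M : Q × Q → ℝ be bilinear forms with: ∫-type form S satisfying S(v,v) ≥ 0 for all v; A coercive with constant γ > 0; M symmetric. Let 0 < α ≤ 1 and define B((y,p),(z,q)) = S(y,z) + A(y,z) - (1/α) M(p,z) + M(y,q) - S(p,q) + A(q,p). Then for all (y,p) ∈ Q × Q, B((y,p),(α y, p)) ≥ α γ (‖y‖² + ‖p‖²), hence the inf-sup constant of B is at least α γ. -/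
/-!
Testing with `(α y, p)`, bilinearity pulls `α` out of the `y`-row, the symmetry of `M` makes the
two coupling terms `-(1/α) M(p, α y)` and `M(y, p)` cancel, and the sign conditions on `S` leave
`α A(y, y) + A(p, p) ≥ α γ (‖y‖² + ‖p‖²)` since `α ≤ 1`. As `‖α y‖ ≤ ‖y‖`, this lower bound also
dominates `α γ ‖(y, p)‖ ‖(α y, p)‖`, which is the inf-sup estimate.
-/

section SaddleForm

variable {E : Type*} [AddCommGroup E] [Module ℝ E] (S A M : E →ₗ[ℝ] E →ₗ[ℝ] ℝ) (α : ℝ)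

noncomputable def saddleForm (y p z q : E) : ℝ :=
  S y z + A y z - (1 / α) * M p z + M y q - S p q + A q p

variable {S A M α}

theorem saddleForm_smul_self (hsymm : ∀ v w : E, M v w = M w v) (hα : α ≠ 0) (y p : E) :
    saddleForm S A M α y p (α • y) p = α * (S y y + A y y) - S p p + A p p := by
  simp only [saddleForm, map_smul, smul_eq_mul, hsymm p y]
  field_simp
  ring

end SaddleForm

theorem saddleForm_smul_self_ge {E : Type*} [NormedAddCommGroup E] [NormedSpace ℝ E]
    {S A M : E →ₗ[ℝ] E →ₗ[ℝ] ℝ} {γ α : ℝ} (hγ : 0 ≤ γ) (hcoer : ∀ v : E, γ * ‖v‖ ^ 2 ≤ A v v)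
    (hsymm : ∀ v w : E, M v w = M w v) (hα₀ : 0 < α) (hα₁ : α ≤ 1) {y p : E}
    (hSy : 0 ≤ S y y) (hSp : S p p ≤ 0) :
    α * γ * (‖y‖ ^ 2 + ‖p‖ ^ 2) ≤ saddleForm S A M α y p (α • y) p := by
  rw [saddleForm_smul_self hsymm hα₀.ne']
  have hAy : α * (γ * ‖y‖ ^ 2) ≤ α * A y y := mul_le_mul_of_nonneg_left (hcoer y) hα₀.le
  have hAp : α * (γ * ‖p‖ ^ 2) ≤ γ * ‖p‖ ^ 2 :=
    mul_le_of_le_one_left (by positivity) hα₁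
  nlinarith [hcoer p]

theorem mul_sqrt_mul_sqrt_le {a b c : ℝ} (hc : 0 ≤ c) (ha : 0 ≤ a) (hba : b ≤ a) :
    c * √a * √b ≤ c * a := by
  calc c * √a * √b ≤ c * √a * √a := by gcongr
    _ = c * a := by rw [mul_assoc, Real.mul_self_sqrt ha]

theorem norm_sq_smul_add_le {E : Type*} [NormedAddCommGroup E] [NormedSpace ℝ E] {α : ℝ}
    (hα : |α| ≤ 1) (y p : E) : ‖α • y‖ ^ 2 + ‖p‖ ^ 2 ≤ ‖y‖ ^ 2 + ‖p‖ ^ 2 := by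
  have : ‖α • y‖ ≤ ‖y‖ := by
    rw [norm_smul, Real.norm_eq_abs]
    exact mul_le_of_le_one_left (norm_nonneg y) hα
  gcongr

theorem discrete_surjectivity_coincident_general
    {Q : Type*} [NormedAddCommGroup Q] [InnerProductSpace ℝ Q]
    (S A M : Q →ₗ[ℝ] Q →ₗ[ℝ] ℝ) (γ α : ℝ)
    (hγ : 0 < γ) (hcoer : ∀ v : Q, A v v ≥ γ * ‖v‖ ^ 2)
    (hsymm : ∀ v w : Q, M v w = M w v)
    (hα₀ : 0 < α) (hα₁ : α ≤ 1) :
    ∀ y p : Q, S y y ≥ 0 → -S p p ≥ 0 →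
      (S y (α • y) + A y (α • y) - (1 / α) * M p (α • y) + M y p - S p p + A p p
          ≥ α * γ * (‖y‖ ^ 2 + ‖p‖ ^ 2)) ∧
      ((y, p) ≠ (0, 0) →
        ∃ z q : Q, ¬(z = 0 ∧ q = 0) ∧
          S y z + A y z - (1 / α) * M p z + M y q - S p q + A q p
            ≥ α * γ * Real.sqrt (‖y‖ ^ 2 + ‖p‖ ^ 2) * Real.sqrt (‖z‖ ^ 2 + ‖q‖ ^ 2)) := by
  intro y p hSy hSp
  have key : α * γ * (‖y‖ ^ 2 + ‖p‖ ^ 2) ≤ saddleForm S A M α y p (α • y) p :=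
    saddleForm_smul_self_ge hγ.le hcoer hsymm hα₀ hα₁ hSy (neg_nonneg.mp hSp)
  refine ⟨key, fun hne => ⟨α • y, p, ?_, ?_⟩⟩
  · rintro ⟨hαy, rfl⟩
    exact hne (by simp [(smul_eq_zero_iff_right hα₀.ne').mp hαy])
  · calc α * γ * √(‖y‖ ^ 2 + ‖p‖ ^ 2) * √(‖α • y‖ ^ 2 + ‖p‖ ^ 2)
        ≤ α * γ * (‖y‖ ^ 2 + ‖p‖ ^ 2) :=
          mul_sqrt_mul_sqrt_le (by positivity) (by positivity)
            (norm_sq_smul_add_le (abs_le.mpr ⟨by linarith, hα₁⟩) y p)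
      _ ≤ saddleForm S A M α y p (α • y) p := key

theorem discrete_surjectivity_coincident
    {Q : Type*} [NormedAddCommGroup Q] [InnerProductSpace ℝ Q] [CompleteSpace Q]
    (S A M : Q →ₗ[ℝ] Q →ₗ[ℝ] ℝ) (γ α : ℝ)
    (hγ : 0 < γ) (hcoer : ∀ v : Q, A v v ≥ γ * ‖v‖ ^ 2)
    (hsymm : ∀ v w : Q, M v w = M w v)
    (hα₀ : 0 < α) (hα₁ : α ≤ 1) :
    ∀ y p : Q, S y y ≥ 0 → -S p p ≥ 0 →
      (S y (α • y) + A y (α • y) - (1 / α) * M p (α • y) + M y p - S p p + A p p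
          ≥ α * γ * (‖y‖ ^ 2 + ‖p‖ ^ 2)) ∧
      ((y, p) ≠ (0, 0) →
        ∃ z q : Q, ¬(z = 0 ∧ q = 0) ∧
          S y z + A y z - (1 / α) * M p z + M y q - S p q + A q p
            ≥ α * γ * Real.sqrt (‖y‖ ^ 2 + ‖p‖ ^ 2) * Real.sqrt (‖z‖ ^ 2 + ‖q‖ ^ 2)) :=
  discrete_surjectivity_coincident_general S A M γ α hγ hcoer hsymm hα₀ hα₁
end
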